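/- arXiv:2410.02977 — 9 statements merged into one kernel-verified Lean document; each statement's English description precedes it below -/
import Mathlib

section
/- Let O be a nonempty set of outcomes and u_1,...,u_n : O → ℝ≥0 utility functions. If an outcome o is proportionally fair (i.e., for all o' ∈ O, (1/n)·∑_i u_i(o')/u_i(o) ≤ 1, where in particular u_i(o) > 0 for all i), then o maximizes Nash welfare, i.e., ∏_i u_i(o') ≤ ∏_i u_i(o) for all o' ∈ O. -/
/-!
By AM–GM, the geometric mean of the ratios `u i o' / u i o` is at most their arithmetic mean,
which proportional fairness bounds by `1`; so `∏ i, u i o' / u i o ≤ 1`.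
-/

open Finset

namespace Real

theorem prod_le_one_of_sum_div_card_le_one {ι : Type*} {s : Finset ι} {z : ι → ℝ}
    (hz : ∀ i ∈ s, 0 ≤ z i) (hmean : (∑ i ∈ s, z i) / #s ≤ 1) : ∏ i ∈ s, z i ≤ 1 := by
  rcases s.eq_empty_or_nonempty with rfl | hs
  · simp
  have hcard : (0 : ℝ) < #s := by exact_mod_cast hs.card_pos
  have hamgm := geom_mean_le_arith_mean s 1 z (fun _ _ => zero_le_one) (by simpa using hcard) hz
  simp only [Pi.one_apply, rpow_one, one_mul, sum_const, nsmul_eq_mul, mul_one] at hamgm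
  refine (rpow_le_rpow_iff (prod_nonneg hz) zero_le_one (inv_pos.2 hcard)).mp ?_
  rw [one_rpow]
  exact hamgm.trans hmean

theorem prod_le_prod_of_sum_div_div_card_le_one {ι : Type*} {s : Finset ι} {a b : ι → ℝ}
    (ha : ∀ i ∈ s, 0 ≤ a i) (hb : ∀ i ∈ s, 0 < b i)
    (hmean : (∑ i ∈ s, a i / b i) / #s ≤ 1) : ∏ i ∈ s, a i ≤ ∏ i ∈ s, b i := by
  have hratio : ∏ i ∈ s, a i / b i ≤ 1 :=
    prod_le_one_of_sum_div_card_le_one (fun i hi => div_nonneg (ha i hi) (hb i hi).le) hmean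
  calc ∏ i ∈ s, a i = (∏ i ∈ s, a i / b i) * ∏ i ∈ s, b i := by
        rw [← prod_mul_distrib]
        exact prod_congr rfl fun i hi => (div_mul_cancel₀ _ (hb i hi).ne').symm
    _ ≤ ∏ i ∈ s, b i :=
        mul_le_of_le_one_left (prod_nonneg fun i hi => (hb i hi).le) hratio

end Real

theorem pf_implies_mnw_general {O : Type*} {n : ℕ}
    (u : Fin n → O → ℝ) (hu : ∀ i o, 0 ≤ u i o)
    (o : O) (hpos : ∀ i, 0 < u i o)
    (hPF : ∀ o' : O, (1 / (n : ℝ)) * ∑ i, u i o' / u i o ≤ 1) :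
    ∀ o' : O, ∏ i, u i o' ≤ ∏ i, u i o := fun o' =>
  Real.prod_le_prod_of_sum_div_div_card_le_one (fun i _ => hu i o') (fun i _ => hpos i)
    (by simpa [one_div, inv_mul_eq_div] using hPF o')

theorem pf_implies_mnw {O : Type*} [Nonempty O] {n : ℕ} (hn : 0 < n)
    (u : Fin n → O → ℝ) (hu : ∀ i o, 0 ≤ u i o)
    (o : O) (hpos : ∀ i, 0 < u i o)
    (hPF : ∀ o' : O, (1 / (n : ℝ)) * ∑ i, u i o' / u i o ≤ 1) :
    ∀ o' : O, ∏ i, u i o' ≤ ∏ i, u i o :=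
  pf_implies_mnw_general u hu o hpos hPF
end

section
/- In the public outcomes model, if an outcome o is proportionally fair, then o is in the core: there is no nonempty group S ⊆ N and outcome o' such that (|S|/n)·u_i(o') ≥ u_i(o) for all i ∈ S with at least one strict inequality. -/
theorem pf_implies_core {O : Type*} {n : ℕ} (hn : 0 < n)
    (u : Fin n → O → ℝ) (hu : ∀ i o, 0 ≤ u i o)
    (o : O) (hpos : ∀ i, 0 < u i o)
    (hPF : ∀ o' : O, (1 / (n : ℝ)) * ∑ i, u i o' / u i o ≤ 1) :
    ¬ ∃ (S : Finset (Fin n)) (o' : O), S.Nonempty ∧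
        (∀ i ∈ S, ((S.card : ℝ) / n) * u i o' ≥ u i o) ∧
        (∃ i ∈ S, ((S.card : ℝ) / n) * u i o' > u i o) := by
  rintro ⟨S, o', hS, hall, i0, hi0, hstrict⟩
  have hn' : (0:ℝ) < n := Nat.cast_pos.mpr hn
  have hc : (0:ℝ) < S.card := Nat.cast_pos.mpr (Finset.card_pos.mpr hS)
  have key : ∀ i ∈ S, (n:ℝ)/S.card ≤ u i o' / u i o := by
    intro i hi
    have h := hall i hi
    rw [ge_iff_le] at h
    rw [div_mul_eq_mul_div, le_div_iff₀ hn'] at h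
    rw [div_le_div_iff₀ hc (hpos i)]
    linarith
  have keystrict : (n:ℝ)/S.card < u i0 o' / u i0 o := by
    have h := hstrict
    rw [div_mul_eq_mul_div, gt_iff_lt, lt_div_iff₀ hn'] at h
    rw [div_lt_div_iff₀ hc (hpos i0)]
    linarith
  have hsumS : (n:ℝ) < ∑ i ∈ S, u i o' / u i o := by
    have := Finset.sum_lt_sum (f := fun _ : Fin n => (n:ℝ)/S.card)
      (g := fun i => u i o' / u i o) key ⟨i0, hi0, keystrict⟩
    have hconst : ∑ _i ∈ S, (n:ℝ)/S.card = n := by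
      rw [Finset.sum_const, nsmul_eq_mul]
      field_simp
    linarith [this, hconst.ge, hconst.le]
  have hsub : ∑ i ∈ S, u i o' / u i o ≤ ∑ i, u i o' / u i o := by
    apply Finset.sum_le_sum_of_subset_of_nonneg (Finset.subset_univ S)
    intro i _ _
    exact div_nonneg (hu i o') (hpos i).le
  have h := hPF o'
  rw [one_div, inv_mul_le_iff₀ hn', mul_one] at h
  linarith
end

section
/- For private goods division among n agents with additive utilities: if an allocation A has individual harm ratio 1 (i.e., there are no agents i, j and allocation A' such that (1/2)·u_i(A') > u_i(A) and u_k(A') ≥ u_k(A) for all k ∉ {i,j}), then A is envy-free: u_i(A_i) ≥ u_i(A_j) for all i, j. -/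
/-- Utility of agent `i` under allocation `A : G → Fin n` (each good assigned
to one agent), with additive valuations `v`. -/
def allocUtil {n : ℕ} {G : Type*} [Fintype G] [DecidableEq (Fin n)]
    (v : Fin n → G → ℝ) (A : G → Fin n) (i : Fin n) : ℝ :=
  ∑ g ∈ Finset.univ.filter (fun g => A g = i), v i g

/-- Value that agent `i` has for the bundle of agent `j`. -/
def bundleVal {n : ℕ} {G : Type*} [Fintype G] [DecidableEq (Fin n)]
    (v : Fin n → G → ℝ) (A : G → Fin n) (i j : Fin n) : ℝ :=
  ∑ g ∈ Finset.univ.filter (fun g => A g = j), v i g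

theorem ihr_one_implies_ef {n : ℕ} {G : Type*} [Fintype G]
    (v : Fin n → G → ℝ) (hv : ∀ i g, 0 ≤ v i g)
    (A : G → Fin n)
    (hIHR : ¬ ∃ (i j : Fin n) (A' : G → Fin n),
        (1 / 2 : ℝ) * allocUtil v A' i > allocUtil v A i ∧
        ∀ k, k ≠ i → k ≠ j → allocUtil v A' k ≥ allocUtil v A k) :
    ∀ i j : Fin n, bundleVal v A i i ≥ bundleVal v A i j := by
  classical
  intro i j
  by_contra h
  push_neg at h
  have hij : i ≠ j := by rintro rfl; exact lt_irrefl _ h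
  apply hIHR
  refine ⟨i, j, fun g => if A g = j then i else A g, ?_, ?_⟩
  · have key : allocUtil v (fun g => if A g = j then i else A g) i
      = bundleVal v A i i + bundleVal v A i j := by
      unfold allocUtil bundleVal
      rw [← Finset.sum_union]
      · apply Finset.sum_congr _ (fun _ _ => rfl)
        ext g
        simp only [Finset.mem_filter, Finset.mem_union, Finset.mem_univ, true_and]
        by_cases hg : A g = j <;> simp [hg, hij]
      · rw [Finset.disjoint_filter]
        intro g _ hgi hgj
        exact hij (hgi ▸ hgj)
    have hAi : allocUtil v A i = bundleVal v A i i := rfl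
    rw [key, hAi]
    linarith
  · intro k hki hkj
    have : (Finset.univ.filter (fun g => (if A g = j then i else A g) = k))
        = Finset.univ.filter (fun g => A g = k) := by
      ext g
      simp only [Finset.mem_filter, Finset.mem_univ, true_and]
      by_cases hg : A g = j <;> simp [hg, hki.symm, hkj.symm]
    unfold allocUtil
    rw [this]
end

section
/- In the public outcomes model, any proportionally fair outcome has group harm ratio 1: if o satisfies (1/n)·∑_i u_i(o')/u_i(o) ≤ 1 for all o' (with u_i(o) > 0 for all i), then there are no nonempty S, T ⊆ N and o' with (|S|/|S∪T|)·u_i(o') ≥ u_i(o) for all i ∈ S (one strict) and u_i(o') ≥ u_i(o) for all i ∉ S∪T. -/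
/-! Write `r i = u i o' / u i o` and `m = |S ∪ T|`. The group-harm condition says `r i ≥ m / |S|` on
`S`, strictly somewhere, so `∑_{i ∈ S} r i > m`; the ratios on `T \ S` are nonnegative and those
outside `S ∪ T` are at least `1`. Hence `∑_i r i > m + (n - m) = n`, contradicting proportional
fairness, which says `∑_i r i ≤ n`. -/

open Finset

namespace Finset

variable {ι : Type*}

lemma card_mul_lt_sum {s : Finset ι} {f : ι → ℝ} {a : ℝ} (hle : ∀ i ∈ s, a ≤ f i)
    (hlt : ∃ i ∈ s, a < f i) : (#s : ℝ) * a < ∑ i ∈ s, f i := by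
  simpa using sum_lt_sum hle hlt

variable [Fintype ι] [DecidableEq ι]

lemma card_lt_sum_of_ghr_ratios {f : ι → ℝ} {S T : Finset ι} (hS : S.Nonempty)
    (hSle : ∀ i ∈ S, (#(S ∪ T) : ℝ) / #S ≤ f i) (hSlt : ∃ i ∈ S, (#(S ∪ T) : ℝ) / #S < f i)
    (hT : ∀ i ∈ T, 0 ≤ f i) (hout : ∀ i ∉ S ∪ T, 1 ≤ f i) :
    (Fintype.card ι : ℝ) < ∑ i, f i := by
  have hSpos : (0 : ℝ) < #S := by exact_mod_cast hS.card_pos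
  have hUnion : (#(S ∪ T) : ℝ) < ∑ i ∈ S ∪ T, f i := calc
    (#(S ∪ T) : ℝ) = #S * (#(S ∪ T) / #S) := by field_simp
    _ < ∑ i ∈ S, f i := card_mul_lt_sum hSle hSlt
    _ ≤ ∑ i ∈ S ∪ T, f i := sum_le_sum_of_subset_of_nonneg subset_union_left
        fun i hi hiS ↦ hT i ((mem_union.mp hi).resolve_left hiS)
  have hCompl : (#(S ∪ T)ᶜ : ℝ) ≤ ∑ i ∈ (S ∪ T)ᶜ, f i := by
    simpa using card_nsmul_le_sum _ f 1 fun i hi ↦ hout i (mem_compl.mp hi)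
  have hcard : (Fintype.card ι : ℝ) = #(S ∪ T) + #(S ∪ T)ᶜ := by
    exact_mod_cast (card_add_card_compl (S ∪ T)).symm
  rw [← sum_add_sum_compl (S ∪ T) f]
  linarith

end Finset

lemma inv_le_div_of_le_mul {p q a : ℝ} (hp : 0 < p) (hq : 0 < q) (h : q ≤ p * a) :
    p⁻¹ ≤ a / q := by
  rwa [le_div_iff₀ hq, inv_mul_le_iff₀ hp]

lemma inv_lt_div_of_lt_mul {p q a : ℝ} (hp : 0 < p) (hq : 0 < q) (h : q < p * a) :
    p⁻¹ < a / q := by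
  rwa [lt_div_iff₀ hq, inv_mul_lt_iff₀ hp]

theorem pf_implies_ghr_one_general {O : Type*} {n : ℕ}
    (u : Fin n → O → ℝ) (hu : ∀ i o, 0 ≤ u i o)
    (o : O) (hpos : ∀ i, 0 < u i o)
    (hPF : ∀ o' : O, (1 / (n : ℝ)) * ∑ i, u i o' / u i o ≤ 1) :
    ¬ ∃ (S T : Finset (Fin n)) (o' : O), S.Nonempty ∧ T.Nonempty ∧
        (∀ i ∈ S, ((S.card : ℝ) / (S ∪ T).card) * u i o' ≥ u i o) ∧
        (∃ i ∈ S, ((S.card : ℝ) / (S ∪ T).card) * u i o' > u i o) ∧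
        (∀ i ∉ S ∪ T, u i o' ≥ u i o) := by
  rintro ⟨S, T, o', hS, -, hSge, ⟨j, hjS, hjgt⟩, hout⟩
  have hn : (0 : ℝ) < n := by exact_mod_cast Fin.pos j
  have hscale : (0 : ℝ) < #S / #(S ∪ T) := div_pos (by exact_mod_cast hS.card_pos)
    (by exact_mod_cast (hS.mono subset_union_left).card_pos)
  have hsum : (n : ℝ) < ∑ i, u i o' / u i o := by
    simpa using card_lt_sum_of_ghr_ratios (f := fun i ↦ u i o' / u i o) hS
      (fun i hi ↦ inv_div (#S : ℝ) _ ▸ inv_le_div_of_le_mul hscale (hpos i) (hSge i hi))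
      ⟨j, hjS, inv_div (#S : ℝ) _ ▸ inv_lt_div_of_lt_mul hscale (hpos j) hjgt⟩
      (fun i _ ↦ div_nonneg (hu i o') (hpos i).le)
      (fun i hi ↦ (one_le_div (hpos i)).mpr (hout i hi))
  have hPFo' := hPF o'
  rw [one_div, inv_mul_le_iff₀ hn, mul_one] at hPFo'
  linarith

theorem pf_implies_ghr_one {O : Type*} {n : ℕ} (hn : 0 < n)
    (u : Fin n → O → ℝ) (hu : ∀ i o, 0 ≤ u i o)
    (o : O) (hpos : ∀ i, 0 < u i o)
    (hPF : ∀ o' : O, (1 / (n : ℝ)) * ∑ i, u i o' / u i o ≤ 1) :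
    ¬ ∃ (S T : Finset (Fin n)) (o' : O), S.Nonempty ∧ T.Nonempty ∧
        (∀ i ∈ S, ((S.card : ℝ) / (S ∪ T).card) * u i o' ≥ u i o) ∧
        (∃ i ∈ S, ((S.card : ℝ) / (S ∪ T).card) * u i o' > u i o) ∧
        (∀ i ∉ S ∪ T, u i o' ≥ u i o) :=
  pf_implies_ghr_one_general u hu o hpos hPF
end

section
/- Let U ⊆ ℝ_{≥0}^n be a compact set of feasible utility vectors such that for every agent i there is x ∈ U with x_i > 0. If U is upper convex (for all x, y ∈ U and α ∈ [0,1] there is z ∈ U with z_i ≥ α·x_i + (1−α)·y_i for all i), then there exists a proportional utility vector x ∈ U, i.e., x_i ≥ (1/n)·y_i for all y ∈ U and all i. -/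
lemma avg_aux {n : ℕ} (U : Set (Fin n → ℝ))
    (hupper : ∀ x ∈ U, ∀ y ∈ U, ∀ α : ℝ, 0 ≤ α → α ≤ 1 →
        ∃ z ∈ U, ∀ i, z i ≥ α * x i + (1 - α) * y i) :
    ∀ m : ℕ, ∀ f : Fin (m + 1) → (Fin n → ℝ), (∀ k, f k ∈ U) →
      ∃ z ∈ U, ∀ i, ((m : ℝ) + 1) * z i ≥ ∑ k, f k i := by
  intro m
  induction m with
  | zero =>
    intro f hf
    exact ⟨f 0, hf 0, fun i => by simp⟩
  | succ m ih =>
    intro f hf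
    obtain ⟨z', hz'U, hz'⟩ := ih (fun k => f k.castSucc) (fun k => hf _)
    have hm1 : (0:ℝ) < (m:ℝ) + 1 := by positivity
    have hm2 : (0:ℝ) < (m:ℝ) + 2 := by positivity
    set α : ℝ := ((m:ℝ) + 1) / ((m:ℝ) + 2) with hα
    have hα0 : 0 ≤ α := by positivity
    have hα1 : α ≤ 1 := by
      rw [hα, div_le_one hm2]; linarith
    obtain ⟨z, hzU, hz⟩ := hupper z' hz'U (f (Fin.last _)) (hf _) α hα0 hα1
    refine ⟨z, hzU, fun i => ?_⟩
    have h1 : (1 : ℝ) - α = 1 / ((m:ℝ) + 2) := by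
      rw [hα]; field_simp; norm_num
    have hz2 := hz i
    have hsum : ∑ k, f k i = (∑ k : Fin (m+1), f k.castSucc i) + f (Fin.last _) i := by
      exact Fin.sum_univ_castSucc (fun k => f k i)
    have hz'i := hz' i
    have key : ((m:ℝ) + 2) * z i ≥ ((m:ℝ) + 1) * z' i + f (Fin.last _) i := by
      have := mul_le_mul_of_nonneg_left hz2 (le_of_lt hm2)
      calc ((m:ℝ) + 2) * z i ≥ ((m:ℝ) + 2) * (α * z' i + (1 - α) * f (Fin.last _) i) := this
        _ = ((m:ℝ) + 1) * z' i + f (Fin.last _) i := by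
            rw [h1, hα]; field_simp
    push_cast
    rw [hsum]
    have : ((m:ℝ) + 1 + 1) = (m:ℝ) + 2 := by ring
    rw [this]
    linarith

theorem prop_exists_of_compact_upper_convex {n : ℕ} (hn : 0 < n)
    (U : Set (Fin n → ℝ)) (hne : U.Nonempty) (hcomp : IsCompact U)
    (hnonneg : ∀ x ∈ U, ∀ i, 0 ≤ x i)
    (hposs : ∀ i : Fin n, ∃ x ∈ U, 0 < x i)
    (hupper : ∀ x ∈ U, ∀ y ∈ U, ∀ α : ℝ, 0 ≤ α → α ≤ 1 →
        ∃ z ∈ U, ∀ i, z i ≥ α * x i + (1 - α) * y i) :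
    ∃ x ∈ U, ∀ y ∈ U, ∀ i, x i ≥ (1 / (n : ℝ)) * y i := by
  -- maximizers for each coordinate
  have hmax : ∀ i : Fin n, ∃ w ∈ U, ∀ y ∈ U, y i ≤ w i := by
    intro i
    obtain ⟨w, hwU, hw⟩ := hcomp.exists_isMaxOn hne ((continuous_apply i).continuousOn)
    exact ⟨w, hwU, fun y hy => hw hy⟩
  choose mx hmxU hmx using hmax
  obtain ⟨m, rfl⟩ : ∃ m, n = m + 1 := ⟨n - 1, (Nat.succ_pred_eq_of_pos hn).symm⟩
  obtain ⟨z, hzU, hz⟩ := avg_aux U hupper m mx hmxU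
  refine ⟨z, hzU, fun y hy i => ?_⟩
  have h1 : ∑ k, mx k i ≥ mx i i :=
    Finset.single_le_sum (f := fun k => mx k i)
      (fun k _ => hnonneg _ (hmxU k) i) (Finset.mem_univ i)
  have h2 : mx i i ≥ y i := hmx i y hy
  have h3 : ((m : ℝ) + 1) * z i ≥ y i := le_trans (le_trans h2 h1) (hz i)
  have hn' : (0:ℝ) < (m:ℝ) + 1 := by positivity
  rw [ge_iff_le]
  push_cast
  rw [div_mul_eq_mul_div, one_mul, div_le_iff₀ hn']
  linarith [h3]
end

section
/- Let U ⊆ ℝ_{≥0}^n be compact and upper convex, with: for each i there exists x ∈ U with x_i > 0. Then every Nash-welfare-maximizing vector x* ∈ U (maximizing ∏_i x_i) satisfies x*_i > 0 for all i, and is proportionally fair: (1/n)·∑_i y_i/x*_i ≤ 1 for all y ∈ U. -/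
/-!
Along the segment from the Nash-welfare maximizer `x` towards any `y ∈ U`, upper convexity
dominates each point `x + t (y - x)` by a point of `U`, so `t ↦ ∏ i, (x i + t (y i - x i))`
is maximal on `[0, 1]` at `t = 0`. Its derivative there, `(∏ i, x i) * (∑ i, y i / x i - n)`,
is therefore nonpositive, which is proportional fairness. Positivity of `x` comes first:
averaging the witnesses of `x i > 0` gives a point of `U` with positive Nash welfare.
-/

open Finset Set

def IsUpperConvex {ι : Type*} (U : Set (ι → ℝ)) : Prop :=
  ∀ x ∈ U, ∀ y ∈ U, ∀ α : ℝ, 0 ≤ α → α ≤ 1 → ∃ z ∈ U, ∀ i, z i ≥ α * x i + (1 - α) * y i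

lemma IsMaxOn.nonpos_of_hasDerivAt_of_Icc {f : ℝ → ℝ} {f' a b : ℝ} (hab : a < b)
    (hmax : IsMaxOn f (Icc a b) a) (hf : HasDerivAt f f' a) : f' ≤ 0 := by
  have hcone : b - a ∈ posTangentConeAt (Icc a b) a :=
    sub_mem_posTangentConeAt_of_segment_subset (segment_eq_Icc hab.le).subset
  have h := hmax.localize.hasFDerivWithinAt_nonpos hf.hasDerivWithinAt.hasFDerivWithinAt hcone
  rw [ContinuousLinearMap.toSpanSingleton_apply, smul_eq_mul] at h
  exact nonpos_of_mul_nonpos_right h (sub_pos.2 hab)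

section

variable {ι : Type*} [Fintype ι]

lemma hasDerivAt_prod_add_mul {x v : ι → ℝ} (hx : ∀ i, x i ≠ 0) :
    HasDerivAt (fun t ↦ ∏ i, (x i + t * v i)) ((∏ i, x i) * ∑ i, v i / x i) 0 := by
  classical
  refine (HasDerivAt.fun_finsetProd (u := univ)
    fun i _ ↦ ((hasDerivAt_id' (0 : ℝ)).mul_const (v i)).const_add (x i)).congr_deriv ?_
  simp only [zero_mul, add_zero, one_mul, smul_eq_mul, mul_sum]
  refine sum_congr rfl fun i _ ↦ ?_
  rw [← prod_erase_mul _ _ (mem_univ i)]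
  field_simp [hx i]

namespace IsUpperConvex

variable {U : Set (ι → ℝ)}

lemma exists_forall_pos (hU : IsUpperConvex U) (hnonneg : ∀ x ∈ U, ∀ i, 0 ≤ x i)
    (hne : U.Nonempty) (hposs : ∀ i, ∃ x ∈ U, 0 < x i) : ∃ z ∈ U, ∀ i, 0 < z i := by
  classical
  suffices ∀ s : Finset ι, ∃ z ∈ U, ∀ i ∈ s, 0 < z i by
    simpa using this univ
  intro s
  induction s using Finset.induction_on with
  | empty => simpa [Set.Nonempty] using hne
  | insert j s _ ih =>
    obtain ⟨z, hz, hzpos⟩ := ih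
    obtain ⟨w, hw, hwj⟩ := hposs j
    obtain ⟨m, hm, hmge⟩ := hU z hz w hw (1 / 2) (by norm_num) (by norm_num)
    refine ⟨m, hm, fun i hi ↦ ?_⟩
    have hmi : m i ≥ z i / 2 + w i / 2 := by linarith [hmge i]
    rcases mem_insert.1 hi with rfl | hi
    · linarith [hnonneg z hz i]
    · linarith [hzpos i hi, hnonneg w hw i]

lemma pos_of_forall_prod_le (hU : IsUpperConvex U) (hnonneg : ∀ x ∈ U, ∀ i, 0 ≤ x i)
    (hposs : ∀ i, ∃ x ∈ U, 0 < x i) {x : ι → ℝ} (hx : x ∈ U)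
    (hmax : ∀ y ∈ U, ∏ i, y i ≤ ∏ i, x i) (i : ι) : 0 < x i := by
  obtain ⟨z, hz, hzpos⟩ := hU.exists_forall_pos hnonneg ⟨x, hx⟩ hposs
  have hprod : 0 < ∏ i, x i :=
    (prod_pos fun i _ ↦ hzpos i).trans_le (hmax z hz)
  exact (hnonneg x hx i).lt_of_ne fun h ↦ hprod.ne' (prod_eq_zero (mem_univ i) h.symm)

lemma sum_div_le_card_of_forall_prod_le (hU : IsUpperConvex U)
    (hnonneg : ∀ x ∈ U, ∀ i, 0 ≤ x i) {x y : ι → ℝ} (hx : x ∈ U) (hy : y ∈ U)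
    (hxpos : ∀ i, 0 < x i) (hmax : ∀ y ∈ U, ∏ i, y i ≤ ∏ i, x i) :
    ∑ i, y i / x i ≤ Fintype.card ι := by
  have hsegment : IsMaxOn (fun t ↦ ∏ i, (x i + t * (y i - x i))) (Icc 0 1) 0 := by
    intro t ⟨ht0, ht1⟩
    obtain ⟨z, hz, hzge⟩ := hU x hx y hy (1 - t) (by linarith) (by linarith)
    show ∏ i, (x i + t * (y i - x i)) ≤ ∏ i, (x i + 0 * (y i - x i))
    calc ∏ i, (x i + t * (y i - x i))
        ≤ ∏ i, z i := prod_le_prod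
          (fun i _ ↦ by nlinarith [(hxpos i).le, hnonneg y hy i])
          (fun i _ ↦ by linarith [hzge i])
      _ ≤ ∏ i, x i := hmax z hz
      _ = ∏ i, (x i + 0 * (y i - x i)) := by simp
  have hderiv := hsegment.nonpos_of_hasDerivAt_of_Icc one_pos
    (hasDerivAt_prod_add_mul fun i ↦ (hxpos i).ne')
  have hsum : ∑ i, (y i - x i) / x i ≤ 0 :=
    nonpos_of_mul_nonpos_right hderiv (prod_pos fun i _ ↦ hxpos i)
  simp only [sub_div, div_self (hxpos _).ne', sum_sub_distrib, sum_const, card_univ,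
    nsmul_eq_mul, mul_one] at hsum
  linarith

end IsUpperConvex

end

theorem mnw_is_pf_of_compact_upper_convex_general {n : ℕ}
    (U : Set (Fin n → ℝ))
    (hnonneg : ∀ x ∈ U, ∀ i, 0 ≤ x i)
    (hposs : ∀ i : Fin n, ∃ x ∈ U, 0 < x i)
    (hupper : ∀ x ∈ U, ∀ y ∈ U, ∀ α : ℝ, 0 ≤ α → α ≤ 1 →
        ∃ z ∈ U, ∀ i, z i ≥ α * x i + (1 - α) * y i)
    (x : Fin n → ℝ) (hx : x ∈ U)
    (hmax : ∀ y ∈ U, ∏ i, y i ≤ ∏ i, x i) :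
    (∀ i, 0 < x i) ∧ (∀ y ∈ U, (1 / (n : ℝ)) * ∑ i, y i / x i ≤ 1) := by
  have hU : IsUpperConvex U := hupper
  have hxpos := hU.pos_of_forall_prod_le hnonneg hposs hx hmax
  refine ⟨hxpos, fun y hy ↦ ?_⟩
  have hsum := hU.sum_div_le_card_of_forall_prod_le hnonneg hx hy hxpos hmax
  rw [Fintype.card_fin] at hsum
  rw [one_div_mul_eq_div]
  exact div_le_one_of_le₀ hsum n.cast_nonneg

theorem mnw_is_pf_of_compact_upper_convex {n : ℕ} (hn : 0 < n)
    (U : Set (Fin n → ℝ)) (hcomp : IsCompact U)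
    (hnonneg : ∀ x ∈ U, ∀ i, 0 ≤ x i)
    (hposs : ∀ i : Fin n, ∃ x ∈ U, 0 < x i)
    (hupper : ∀ x ∈ U, ∀ y ∈ U, ∀ α : ℝ, 0 ≤ α → α ≤ 1 →
        ∃ z ∈ U, ∀ i, z i ≥ α * x i + (1 - α) * y i)
    (x : Fin n → ℝ) (hx : x ∈ U)
    (hmax : ∀ y ∈ U, ∏ i, y i ≤ ∏ i, x i) :
    (∀ i, 0 < x i) ∧ (∀ y ∈ U, (1 / (n : ℝ)) * ∑ i, y i / x i ≤ 1) :=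
  mnw_is_pf_of_compact_upper_convex_general U hnonneg hposs hupper x hx hmax
end

section
/- Let a_1 ≥ a_2 ≥ ... ≥ a_n > 0 and b_1 ≥ b_2 ≥ ... ≥ b_n > 0 be such that, after sorting agents by b_i/a_i nondecreasingly, for every i with b_i > a_i one has a_i/b_i ≥ i/(n−k+i), where k = |{j : b_j > a_j}|, and a_i ≥ b_i for all i > k. Then ∏_{i=1}^n a_i ≥ (1/C(n, k)) · ∏_{i=1}^n b_i ≥ (1/C(n, ⌊n/2⌋)) · ∏_{i=1}^n b_i, where C(n,k) is the binomial coefficient. (This is the core computation in the proof that 1-GHR implies a C(n,⌊n/2⌋)^{1/n}-approximation of maximum Nash welfare.) -/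
open Finset Nat

theorem Finset.prod_mul_le_prod_of_le_div {ι R : Type*} [Field R] [LinearOrder R]
    [IsStrictOrderedRing R] (s : Finset ι) {a b r : ι → R} (hb : ∀ i ∈ s, 0 < b i)
    (hr : ∀ i ∈ s, 0 ≤ r i) (h : ∀ i ∈ s, r i ≤ a i / b i) :
    (∏ i ∈ s, r i) * ∏ i ∈ s, b i ≤ ∏ i ∈ s, a i := by
  rw [← prod_mul_distrib]
  exact prod_le_prod (fun i hi => mul_nonneg (hr i hi) (hb i hi).le)
    fun i hi => (le_div_iff₀ (hb i hi)).1 (h i hi)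

theorem prod_range_div_eq_inv_choose (m k : ℕ) :
    ∏ i ∈ range k, ((i + 1 : ℝ) / (m + i + 1)) = ((m + k).choose k : ℝ)⁻¹ := by
  have hnum : ∏ i ∈ range k, ((i : ℝ) + 1) = k ! := by
    exact_mod_cast prod_range_add_one_eq_factorial k
  have hden : ∏ i ∈ range k, ((m : ℝ) + i + 1) = k ! * (m + k).choose k := by
    rw [← Nat.cast_mul, ← Nat.ascFactorial_eq_factorial_mul_choose,
      Nat.ascFactorial_eq_prod_range]
    push_cast
    exact prod_congr rfl fun i _ => by ring
  rw [prod_div_distrib, hnum, hden, div_mul_cancel_left₀ (by positivity)]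

theorem prod_range_ite_lt_div_eq_inv_choose {m k n : ℕ} (hk : k ≤ n) :
    ∏ i ∈ range n, (if i < k then (i + 1 : ℝ) / (m + i + 1) else 1)
      = ((m + k).choose k : ℝ)⁻¹ := by
  rw [← prod_filter, ← prod_range_div_eq_inv_choose]
  congr 1
  ext i
  simp only [mem_filter, mem_range]
  omega

theorem sorted_ratio_product_bound_general {n k : ℕ} (hk : k ≤ n)
    (a b : Fin n → ℝ) (hb : ∀ i, 0 < b i)
    (hlow : ∀ i : Fin n, (i : ℕ) < k →
        a i / b i ≥ ((i : ℕ) + 1 : ℝ) / ((n : ℝ) - k + (i : ℕ) + 1))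
    (hhigh : ∀ i : Fin n, k ≤ (i : ℕ) → a i / b i ≥ 1) :
    (∏ i, a i) ≥ (1 / (n.choose k : ℝ)) * ∏ i, b i ∧
    (∏ i, a i) ≥ (1 / (n.choose (n / 2) : ℝ)) * ∏ i, b i := by
  set r : ℕ → ℝ := fun i => if i < k then (i + 1 : ℝ) / ((n - k : ℕ) + i + 1) else 1
  have hr : ∀ i : Fin n, r i ≤ a i / b i := by
    intro i
    by_cases hi : (i : ℕ) < k
    · simpa [r, hi, Nat.cast_sub hk] using hlow i hi
    · simpa [r, hi] using hhigh i (not_lt.1 hi)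
  have hprod : ∏ i : Fin n, r i = (n.choose k : ℝ)⁻¹ := by
    rw [Fin.prod_univ_eq_prod_range r, prod_range_ite_lt_div_eq_inv_choose hk,
      Nat.sub_add_cancel hk]
  have hmain := prod_mul_le_prod_of_le_div univ (fun i _ => hb i)
    (fun i _ => by positivity) (fun i _ => hr i)
  rw [hprod, ← one_div] at hmain
  have hmiddle : 1 / (n.choose (n / 2) : ℝ) ≤ 1 / n.choose k :=
    one_div_le_one_div_of_le (by exact_mod_cast Nat.choose_pos hk)
      (by exact_mod_cast Nat.choose_le_middle k n)
  exact ⟨hmain, le_trans (mul_le_mul_of_nonneg_right hmiddle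
    (prod_pos fun i _ => hb i).le) hmain⟩

theorem sorted_ratio_product_bound {n k : ℕ} (hk : k ≤ n)
    (a b : Fin n → ℝ) (ha : ∀ i, 0 < a i) (hb : ∀ i, 0 < b i)
    (hsorted : ∀ i j : Fin n, i ≤ j → a i / b i ≤ a j / b j)
    (hlow : ∀ i : Fin n, (i : ℕ) < k →
        a i / b i ≥ ((i : ℕ) + 1 : ℝ) / ((n : ℝ) - k + (i : ℕ) + 1))
    (hhigh : ∀ i : Fin n, k ≤ (i : ℕ) → a i / b i ≥ 1) :
    (∏ i, a i) ≥ (1 / (n.choose k : ℝ)) * ∏ i, b i ∧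
    (∏ i, a i) ≥ (1 / (n.choose (n / 2) : ℝ)) * ∏ i, b i :=
  sorted_ratio_product_bound_general hk a b hb hlow hhigh
end

section
/- In the public outcomes model, if outcome o has group harm ratio 1 (1-GHR), then for every outcome o', (∏_i u_i(o))^{1/n} ≥ C(n,⌊n/2⌋)^{−1/n} · (∏_i u_i(o'))^{1/n}, where C(n,k) is the binomial coefficient. In particular, since C(n,⌊n/2⌋)^{1/n} ≤ 2, the Nash welfare of o is at least half the maximum Nash welfare. -/
/-!
Let `L` be the set of agents who strictly prefer `o'` to `o`. Applying 1-GHR to a nonempty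
`S ⊆ L` with `T = Lᶜ` yields some `j ∈ S` with `u j o ≥ #S / (#S + #Lᶜ) * u j o'`; removing such
witnesses one at a time, the ratios multiply to `1 / C(n, #L)`, so
`∏_{i ∈ L} u i o ≥ C(n, #L)⁻¹ * ∏_{i ∈ L} u i o'`, while `u i o ≥ u i o'` off `L`.
Finally `C(n, #L) ≤ C(n, ⌊n/2⌋) ≤ 2 ^ n`.
-/

open Finset

section

variable {ι O : Type*}

def IsOneGHR [DecidableEq ι] (u : ι → O → ℝ) (o : O) : Prop :=
  ¬ ∃ (S T : Finset ι) (o' : O), S.Nonempty ∧ T.Nonempty ∧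
    (∀ i ∈ S, ((#S : ℝ) / #(S ∪ T)) * u i o' ≥ u i o) ∧
    (∃ i ∈ S, ((#S : ℝ) / #(S ∪ T)) * u i o' > u i o) ∧
    (∀ i ∉ S ∪ T, u i o' ≥ u i o)

theorem IsOneGHR.exists_mul_le [DecidableEq ι] {u : ι → O → ℝ} {o : O}
    (h : IsOneGHR u o) {S T : Finset ι} {o' : O} (hS : S.Nonempty) (hT : T.Nonempty)
    (hout : ∀ i ∉ S ∪ T, u i o ≤ u i o') :
    ∃ j ∈ S, ((#S : ℝ) / #(S ∪ T)) * u j o' ≤ u j o := by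
  by_contra! hgt
  obtain ⟨j, hj⟩ := hS
  exact h ⟨S, T, o', ⟨j, hj⟩, hT, fun i hi => (hgt i hi).le, ⟨j, hj, hgt j hj⟩, hout⟩

theorem inv_choose_add_one (m s : ℕ) :
    ((m + (s + 1)).choose (s + 1) : ℝ)⁻¹ = (s + 1) / (m + (s + 1)) * ((m + s).choose s : ℝ)⁻¹ := by
  have hrec : ((m + s + 1 : ℕ) : ℝ) * (m + s).choose s =
      (m + s + 1).choose (s + 1) * (s + 1 : ℕ) := by
    exact_mod_cast Nat.add_one_mul_choose_eq (m + s) s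
  have hpos : (0 : ℝ) < (m + s).choose s := by exact_mod_cast Nat.choose_pos (by omega)
  have hpos' : (0 : ℝ) < (m + s + 1).choose (s + 1) := by exact_mod_cast Nat.choose_pos (by omega)
  rw [← add_assoc]
  push_cast at hrec ⊢
  field_simp
  linarith

theorem inv_choose_mul_prod_le_prod [DecidableEq ι] {f g : ι → ℝ} (hg : ∀ i, 0 ≤ g i) {m : ℕ}
    {L : Finset ι} (h : ∀ S ⊆ L, S.Nonempty → ∃ j ∈ S, ((#S : ℝ) / (m + #S)) * g j ≤ f j) :
    ((m + #L).choose #L : ℝ)⁻¹ * ∏ i ∈ L, g i ≤ ∏ i ∈ L, f i := by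
  induction L using Finset.strongInduction with
  | H L ih =>
  rcases L.eq_empty_or_nonempty with rfl | hL
  · simp
  obtain ⟨j, hj, hgf⟩ := h L subset_rfl hL
  have ih' := ih (L.erase j) (erase_ssubset hj) fun S hS => h S (hS.trans (erase_subset j L))
  rw [← card_erase_add_one hj] at hgf ⊢
  rw [← mul_prod_erase L f hj, ← mul_prod_erase L g hj, inv_choose_add_one]
  have hf_nonneg : 0 ≤ f j := (mul_nonneg (by positivity) (hg j)).trans hgf
  calc _ = ((#(L.erase j) + 1 : ℝ) / (m + (#(L.erase j) + 1)) * g j) *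
        (((m + #(L.erase j)).choose #(L.erase j) : ℝ)⁻¹ * ∏ i ∈ L.erase j, g i) := by
        ring
    _ ≤ f j * ∏ i ∈ L.erase j, f i := by
        refine mul_le_mul (by exact_mod_cast hgf) ih' ?_ hf_nonneg
        exact mul_nonneg (by positivity) (prod_nonneg fun i _ => hg i)

theorem IsOneGHR.inv_choose_mul_prod_le_prod [Fintype ι] [DecidableEq ι]
    {u : ι → O → ℝ} {o o' : O} (h : IsOneGHR u o) (hu' : ∀ i, 0 ≤ u i o') :
    ((Fintype.card ι).choose (Fintype.card ι / 2) : ℝ)⁻¹ * ∏ i, u i o' ≤ ∏ i, u i o := by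
  set L := univ.filter fun i => u i o < u i o'
  have hL : ∀ S ⊆ L, S.Nonempty → ∃ j ∈ S, ((#S : ℝ) / (#Lᶜ + #S)) * u j o' ≤ u j o := by
    intro S hSL hS
    have hT : Lᶜ.Nonempty := by
      rw [nonempty_iff_ne_empty, Ne, compl_eq_empty_iff]
      intro hLuniv
      have : Nonempty ι := ⟨hS.choose⟩
      obtain ⟨j, -, hj⟩ := h.exists_mul_le (o' := o') univ_nonempty univ_nonempty (by simp)
      have hjL : j ∈ L := hLuniv ▸ mem_univ j
      simp only [L, mem_filter] at hjL
      rw [union_self, div_self (by simp), one_mul] at hj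
      linarith
    obtain ⟨j, hj, hle⟩ := h.exists_mul_le hS hT fun i hi => by
      simp only [mem_union, mem_compl, not_or, not_not] at hi
      exact (mem_filter.1 hi.2).2.le
    rw [card_union_of_disjoint (disjoint_compl_right.mono_left hSL), add_comm] at hle
    exact ⟨j, hj, by exact_mod_cast hle⟩
  have hprodL := _root_.inv_choose_mul_prod_le_prod hu' hL
  rw [card_compl_add_card] at hprodL
  have hprodLc : ∏ i ∈ Lᶜ, u i o' ≤ ∏ i ∈ Lᶜ, u i o :=
    prod_le_prod (fun i _ => hu' i) fun i hi => by simpa [L] using hi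
  have hchoose :
      ((Fintype.card ι).choose #L : ℝ) ≤ (Fintype.card ι).choose (Fintype.card ι / 2) := by
    exact_mod_cast Nat.choose_le_middle _ _
  have hchoose_pos : (0 : ℝ) < (Fintype.card ι).choose #L := by
    exact_mod_cast Nat.choose_pos (card_le_univ L)
  calc _ ≤ ((Fintype.card ι).choose #L : ℝ)⁻¹ * ∏ i, u i o' := by
        gcongr
        exact prod_nonneg fun i _ => hu' i
    _ = (((Fintype.card ι).choose #L : ℝ)⁻¹ * ∏ i ∈ L, u i o') * ∏ i ∈ Lᶜ, u i o' := by
        rw [← prod_mul_prod_compl L]; ring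
    _ ≤ (∏ i ∈ L, u i o) * ∏ i ∈ Lᶜ, u i o :=
        mul_le_mul hprodL hprodLc (prod_nonneg fun i _ => hu' i)
          ((mul_nonneg (by positivity) (prod_nonneg fun i _ => hu' i)).trans hprodL)
    _ = ∏ i, u i o := prod_mul_prod_compl L _

end

theorem rpow_neg_mul_rpow_le_rpow {a b C x : ℝ} (hC : 0 ≤ C) (hb : 0 ≤ b) (hx : 0 ≤ x)
    (h : C⁻¹ * b ≤ a) : C ^ (-x) * b ^ x ≤ a ^ x := by
  rw [Real.rpow_neg hC, ← Real.inv_rpow hC, ← Real.mul_rpow (inv_nonneg.2 hC) hb]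
  exact Real.rpow_le_rpow (by positivity) h hx

theorem inv_two_le_rpow_neg_one_div {C : ℝ} {n : ℕ} (hC : 0 < C) (hC2 : C ≤ 2 ^ n) :
    2⁻¹ ≤ C ^ (-1 / n : ℝ) := by
  rcases n.eq_zero_or_pos with rfl | hn
  · norm_num
  have hroot : C ^ (1 / n : ℝ) ≤ 2 := by
    calc C ^ (1 / n : ℝ) ≤ ((2 : ℝ) ^ n) ^ (1 / n : ℝ) := by gcongr
      _ = 2 := by rw [one_div, Real.pow_rpow_inv_natCast zero_le_two hn.ne']
  rw [neg_div, Real.rpow_neg hC.le]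
  gcongr

theorem ghr_one_implies_nw_approx_general {O : Type*} {n : ℕ}
    (u : Fin n → O → ℝ) (hu : ∀ i o, 0 ≤ u i o)
    (o : O)
    (hGHR : ¬ ∃ (S T : Finset (Fin n)) (o' : O), S.Nonempty ∧ T.Nonempty ∧
        (∀ i ∈ S, ((S.card : ℝ) / (S ∪ T).card) * u i o' ≥ u i o) ∧
        (∃ i ∈ S, ((S.card : ℝ) / (S ∪ T).card) * u i o' > u i o) ∧
        (∀ i ∉ S ∪ T, u i o' ≥ u i o)) :
    ∀ o' : O,
      (∏ i, u i o) ^ ((1 : ℝ) / n) ≥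
        ((n.choose (n / 2) : ℝ)) ^ (-(1 : ℝ) / n) * (∏ i, u i o') ^ ((1 : ℝ) / n) ∧
      (∏ i, u i o) ^ ((1 : ℝ) / n) ≥ (1 / 2 : ℝ) * (∏ i, u i o') ^ ((1 : ℝ) / n) := by
  intro o'
  have hprod : ((n.choose (n / 2) : ℝ))⁻¹ * ∏ i, u i o' ≤ ∏ i, u i o := by
    simpa using IsOneGHR.inv_choose_mul_prod_le_prod hGHR fun i => hu i o'
  have hchoose_pos : (0 : ℝ) < n.choose (n / 2) := by
    exact_mod_cast Nat.choose_pos (n.div_le_self 2)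
  have hprod_nonneg : 0 ≤ ∏ i, u i o' := prod_nonneg fun i _ => hu i o'
  have hnw : ((n.choose (n / 2) : ℝ)) ^ (-(1 : ℝ) / n) * (∏ i, u i o') ^ ((1 : ℝ) / n) ≤
      (∏ i, u i o) ^ ((1 : ℝ) / n) := by
    rw [neg_div]
    exact rpow_neg_mul_rpow_le_rpow hchoose_pos.le hprod_nonneg (by positivity) hprod
  refine ⟨hnw, le_trans ?_ hnw⟩
  rw [one_div]
  gcongr
  exact inv_two_le_rpow_neg_one_div hchoose_pos (by exact_mod_cast Nat.choose_le_two_pow n _)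

theorem ghr_one_implies_nw_approx {O : Type*} {n : ℕ} (hn : 0 < n)
    (u : Fin n → O → ℝ) (hu : ∀ i o, 0 ≤ u i o)
    (o : O)
    (hGHR : ¬ ∃ (S T : Finset (Fin n)) (o' : O), S.Nonempty ∧ T.Nonempty ∧
        (∀ i ∈ S, ((S.card : ℝ) / (S ∪ T).card) * u i o' ≥ u i o) ∧
        (∃ i ∈ S, ((S.card : ℝ) / (S ∪ T).card) * u i o' > u i o) ∧
        (∀ i ∉ S ∪ T, u i o' ≥ u i o)) :
    ∀ o' : O,
      (∏ i, u i o) ^ ((1 : ℝ) / n) ≥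
        ((n.choose (n / 2) : ℝ)) ^ (-(1 : ℝ) / n) * (∏ i, u i o') ^ ((1 : ℝ) / n) ∧
      (∏ i, u i o) ^ ((1 : ℝ) / n) ≥ (1 / 2 : ℝ) * (∏ i, u i o') ^ ((1 : ℝ) / n) :=
  ghr_one_implies_nw_approx_general u hu o hGHR
end

section
/- For every n ≥ 2 and ε ∈ (0, 1/2), consider the two-outcome instance with N = [n], u_i(o) = i/(⌈n/2⌉ + i) + ε for i ≤ ⌊n/2⌋ and u_i(o) = 1 + ε for i > ⌊n/2⌋, and u_i(o*) = 1 for all i. Then o has group harm ratio 1: there are no nonempty S, T ⊆ N such that (|S|/|S∪T|)·u_i(o*) ≥ u_i(o) for all i ∈ S with one strict inequality and u_i(o*) ≥ u_i(o) for all i ∉ S∪T. -/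
theorem tightness_instance_is_ghr_one (n : ℕ) (hn : 2 ≤ n)
    (ε : ℝ) (hε0 : 0 < ε) (hε : ε < 1 / 2)
    (uo ustar : Fin n → ℝ)
    (huo : ∀ i : Fin n, uo i =
        if (i : ℕ) < n / 2 then ((i : ℕ) + 1 : ℝ) / (((n + 1) / 2 : ℕ) + (i : ℕ) + 1) + ε
        else 1 + ε)
    (hustar : ∀ i : Fin n, ustar i = 1) :
    ¬ ∃ S T : Finset (Fin n), S.Nonempty ∧ T.Nonempty ∧
        (∀ i ∈ S, ((S.card : ℝ) / (S ∪ T).card) * ustar i ≥ uo i) ∧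
        (∃ i ∈ S, ((S.card : ℝ) / (S ∪ T).card) * ustar i > uo i) ∧
        (∀ i ∉ S ∪ T, ustar i ≥ uo i) := by
  rintro ⟨S, T, hS, hT, hall, -, hout⟩
  have hcardST : 0 < ((S ∪ T).card : ℝ) := by
    have : 0 < (S ∪ T).card :=
      Finset.card_pos.mpr ⟨hS.choose, Finset.mem_union_left _ hS.choose_spec⟩
    exact_mod_cast this
  have hratio_le_one : (S.card : ℝ) / (S ∪ T).card ≤ 1 := by
    rw [div_le_one hcardST]
    exact_mod_cast Finset.card_le_card Finset.subset_union_left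
  -- all high agents are in S ∪ T
  have hhigh : ∀ i : Fin n, n / 2 ≤ (i : ℕ) → i ∈ S ∪ T := by
    intro i hi
    by_contra hmem
    have h1 := hout i hmem
    rw [hustar, huo, if_neg (Nat.not_lt.mpr hi)] at h1
    linarith
  -- all agents in S are low
  have hSlow : ∀ i ∈ S, (i : ℕ) < n / 2 := by
    intro i hi
    by_contra h
    have h2 := hall i hi
    rw [hustar, huo, if_neg h, mul_one] at h2
    linarith
  -- cardinality bound
  have hhn : n / 2 < n := by omega
  have hH : (Finset.Ici (⟨n / 2, hhn⟩ : Fin n)).card = (n + 1) / 2 := by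
    rw [Fin.card_Ici]; show n - n / 2 = (n + 1) / 2; omega
  have hdisj : Disjoint S (Finset.Ici (⟨n / 2, hhn⟩ : Fin n)) := by
    rw [Finset.disjoint_left]
    intro i hi hi'
    have h1 := hSlow i hi
    have h2' : (⟨n / 2, hhn⟩ : Fin n) ≤ i := Finset.mem_Ici.mp hi'
    have h2 : n / 2 ≤ (i : ℕ) := Fin.le_def.mp h2'
    omega
  have hsub : S ∪ Finset.Ici (⟨n / 2, hhn⟩ : Fin n) ⊆ S ∪ T := by
    apply Finset.union_subset Finset.subset_union_left
    intro i hi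
    have h2' : (⟨n / 2, hhn⟩ : Fin n) ≤ i := Finset.mem_Ici.mp hi
    exact hhigh i (Fin.le_def.mp h2')
  have hcard : S.card + (n + 1) / 2 ≤ (S ∪ T).card := by
    calc S.card + (n + 1) / 2 = (S ∪ Finset.Ici (⟨n / 2, hhn⟩ : Fin n)).card := by
          rw [Finset.card_union_of_disjoint hdisj, hH]
      _ ≤ (S ∪ T).card := Finset.card_le_card hsub
  -- max element of S
  set i0 := S.max' hS with hi0
  have hkle : S.card ≤ (i0 : ℕ) + 1 := by
    have : S ⊆ Finset.Iic i0 := fun j hj => Finset.mem_Iic.mpr (S.le_max' j hj)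
    have := Finset.card_le_card this
    rwa [Fin.card_Iic] at this
  have h3 := hall i0 (S.max'_mem hS)
  rw [hustar, huo, if_pos (hSlow i0 (S.max'_mem hS)), mul_one] at h3
  -- real arithmetic
  set k : ℝ := (S.card : ℝ) with hk
  set m : ℝ := (((n + 1) / 2 : ℕ) : ℝ) with hmr
  set a : ℝ := ((i0 : ℕ) : ℝ) + 1 with ha
  have hk1 : (1 : ℝ) ≤ k := by
    have h : 1 ≤ S.card := Finset.card_pos.mpr hS
    rw [hk]; exact_mod_cast h
  have hm1 : (1 : ℝ) ≤ m := by
    have h : 1 ≤ (n + 1) / 2 := by omega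
    rw [hmr]; exact_mod_cast h
  have hka : k ≤ a := by
    have := hkle
    rw [ha, hk]
    push_cast
    exact_mod_cast by exact_mod_cast this
  have hN : k + m ≤ ((S ∪ T).card : ℝ) := by
    rw [hk, hmr]
    exact_mod_cast hcard
  have h4 : k / ((S ∪ T).card : ℝ) ≤ k / (k + m) :=
    div_le_div_of_nonneg_left (by linarith) (by linarith) hN
  have h5 : k / (k + m) ≤ a / (a + m) := by
    rw [div_le_div_iff₀ (by linarith) (by linarith)]
    nlinarith
  have h6 : a / (a + m) + ε ≤ k / ((S ∪ T).card : ℝ) := by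
    have : ((((n + 1) / 2 : ℕ) : ℝ) + (i0 : ℕ) + 1) = a + m := by rw [ha, hmr]; ring
    rw [← this]
    convert h3 using 2
  linarith
end
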